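/- arXiv:1410.5913 — 2 statements merged into one kernel-verified Lean document; each statement's English description precedes it below -/
import Mathlib

section
/- Let X be a nonnegative random variable and λ > 0, p ≥ 1. Suppose there exist constants C₁ ≥ 1, C₂ > 0, t ∈ (0,1], and a random variable N taking values in ℕ with ℙ(N = k) = e^{−λ} λ^k / k!, such that for every k, ℙ(X ≤ ε | N = k) ≤ ε^p for all 0 < ε ≤ C₁^{-1}(t/(k+1))^{C₂}. Then 𝔼[X^{−np}] < ∞ for every positive integer n with np < p, and more generally 𝔼[X^{−q}] < ∞ for every q < p. -/
/-!
Conditionally on `N = k`, the layer-cake formula turns the small-ball bound `ε ^ p` for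
`ε ≤ δₖ` into `𝔼[X ^ (-q) | N = k] ≤ p / (p - q) · δₖ ^ (-q)` for `q < p`. The radius
`δₖ = C₁⁻¹ (t / (k + 1)) ^ C₂` shrinks only polynomially, so `δₖ ^ (-q)` grows at most
geometrically (`k + 1 ≤ eᵏ`), and the Poisson weights `λᵏ / k!` beat any geometric growth:
summing over `k` gives `𝔼[X ^ (-q)] < ∞`. The first claim is vacuous, since `n ≥ 1` forces
`n p ≥ p`.
-/

open MeasureTheory ProbabilityTheory Set

lemma setOf_lt_rpow_neg_subset {Ω : Type*} (X : Ω → ℝ) {q s : ℝ} (hq : 0 < q) (hs : 0 < s) :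
    {ω | s < X ω ^ (-q)} ⊆ {ω | X ω ≤ s ^ (-q⁻¹)} := by
  intro ω (hω : s < X ω ^ (-q))
  show X ω ≤ s ^ (-q⁻¹)
  by_contra! h
  have hlt := Real.rpow_lt_rpow_of_neg (Real.rpow_pos_of_pos hs _) h (neg_lt_zero.2 hq)
  rw [← Real.rpow_mul hs.le, neg_mul_neg, inv_mul_cancel₀ hq.ne', Real.rpow_one] at hlt
  exact lt_asymm hω hlt

section LayerCake

variable {Ω : Type*} [MeasurableSpace Ω] {ν : Measure Ω} {X : Ω → ℝ} {p q δ : ℝ}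

lemma measure_lt_rpow_neg_le (hq : 0 < q) (hδ : 0 < δ)
    (hsb : ∀ ε, 0 < ε → ε ≤ δ → ν {ω | X ω ≤ ε} ≤ ENNReal.ofReal (ε ^ p))
    {s : ℝ} (hs : δ ^ (-q) < s) :
    ν {ω | s < X ω ^ (-q)} ≤ ENNReal.ofReal (s ^ (-q⁻¹ * p)) := by
  have hs0 : 0 < s := (Real.rpow_pos_of_pos hδ _).trans hs
  have hεδ : s ^ (-q⁻¹) ≤ δ := by
    have := Real.rpow_lt_rpow_of_neg (Real.rpow_pos_of_pos hδ _) hs (neg_lt_zero.2 (inv_pos.2 hq))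
    rw [← Real.rpow_mul hδ.le, neg_mul_neg, mul_inv_cancel₀ hq.ne', Real.rpow_one] at this
    exact this.le
  calc ν {ω | s < X ω ^ (-q)} ≤ ν {ω | X ω ≤ s ^ (-q⁻¹)} :=
        measure_mono (setOf_lt_rpow_neg_subset X hq hs0)
    _ ≤ ENNReal.ofReal ((s ^ (-q⁻¹)) ^ p) := hsb _ (Real.rpow_pos_of_pos hs0 _) hεδ
    _ = ENNReal.ofReal (s ^ (-q⁻¹ * p)) := by rw [← Real.rpow_mul hs0.le]

lemma lintegral_Ioi_rpow_of_lt {a c : ℝ} (ha : a < -1) (hc : 0 < c) :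
    ∫⁻ s in Ioi c, ENNReal.ofReal (s ^ a) = ENNReal.ofReal (-c ^ (a + 1) / (a + 1)) := by
  rw [← integral_Ioi_rpow_of_lt ha hc,
    ofReal_integral_eq_lintegral_ofReal (integrableOn_Ioi_rpow_of_lt ha hc)]
  filter_upwards [ae_restrict_mem measurableSet_Ioi] with s hs
  exact Real.rpow_nonneg (hc.trans hs).le _

lemma lintegral_rpow_neg_le_of_measure_le_rpow [IsZeroOrProbabilityMeasure ν]
    (hX : Measurable X) (hX₀ : ∀ ω, 0 ≤ X ω) (hq : 0 < q) (hqp : q < p)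
    (hδ : 0 < δ) (hδ₁ : δ ≤ 1)
    (hsb : ∀ ε, 0 < ε → ε ≤ δ → ν {ω | X ω ≤ ε} ≤ ENNReal.ofReal (ε ^ p)) :
    ∫⁻ ω, ENNReal.ofReal (X ω ^ (-q)) ∂ν ≤ ENNReal.ofReal (p / (p - q) * δ ^ (-q)) := by
  -- Layer cake at the level `A = δ ^ (-q)`: below it `ν ≤ 1`, above it the small-ball bound.
  set A := δ ^ (-q)
  have hpq : 0 < p - q := sub_pos.2 hqp
  have hA : 0 < A := Real.rpow_pos_of_pos hδ _
  have hexp : -q⁻¹ * p < -1 := by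
    rw [neg_mul, neg_lt_neg_iff, inv_mul_eq_div]; exact (one_lt_div hq).2 hqp
  have hhead : ∫⁻ s in Ioc 0 A, ν {ω | s < X ω ^ (-q)} ≤ ENNReal.ofReal A := by
    calc ∫⁻ s in Ioc 0 A, ν {ω | s < X ω ^ (-q)} ≤ ∫⁻ _ in Ioc 0 A, 1 :=
          lintegral_mono fun _ => prob_le_one
      _ = ENNReal.ofReal A := by simp
  have htail : ∫⁻ s in Ioi A, ν {ω | s < X ω ^ (-q)}
      ≤ ENNReal.ofReal (-A ^ (-q⁻¹ * p + 1) / (-q⁻¹ * p + 1)) := by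
    rw [← lintegral_Ioi_rpow_of_lt hexp hA]
    exact setLIntegral_mono (by fun_prop) fun s hs => measure_lt_rpow_neg_le hq hδ hsb hs
  have htail_eq : -A ^ (-q⁻¹ * p + 1) / (-q⁻¹ * p + 1) = q / (p - q) * δ ^ (p - q) := by
    rw [← Real.rpow_mul hδ.le, show -q * (-q⁻¹ * p + 1) = p - q by field_simp; ring,
      show -q⁻¹ * p + 1 = -((p - q) / q) by field_simp; ring, div_neg, neg_div, neg_neg]
    field_simp
  rw [lintegral_eq_lintegral_meas_lt ν (.of_forall fun ω => Real.rpow_nonneg (hX₀ ω) _)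
      (by fun_prop), ← Ioc_union_Ioi_eq_Ioi hA.le,
    lintegral_union measurableSet_Ioi (Ioc_disjoint_Ioi le_rfl)]
  calc _ ≤ ENNReal.ofReal A + ENNReal.ofReal (q / (p - q) * δ ^ (p - q)) := by
        rw [← htail_eq]; exact add_le_add hhead htail
    _ ≤ ENNReal.ofReal (p / (p - q) * A) := by
        have hδA : δ ^ (p - q) ≤ A := (Real.rpow_le_one hδ.le hδ₁ hpq.le).trans
          (Real.one_le_rpow_of_pos_of_le_one_of_nonpos hδ hδ₁ (neg_nonpos.2 hq.le))
        rw [← ENNReal.ofReal_add hA.le (by positivity)]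
        refine ENNReal.ofReal_le_ofReal ?_
        calc A + q / (p - q) * δ ^ (p - q) ≤ A + q / (p - q) * A := by gcongr
          _ = p / (p - q) * A := by field_simp; ring

end LayerCake

section Fibers

variable {Ω α : Type*} [MeasurableSpace Ω] {μ : Measure Ω}

lemma measure_mul_lintegral_cond {s : Set Ω} (hs : μ s ≠ ⊤) (f : Ω → ENNReal) :
    μ s * ∫⁻ ω, f ω ∂μ[|s] = ∫⁻ ω in s, f ω ∂μ := by
  by_cases hs₀ : μ s = 0
  · simp [hs₀, Measure.restrict_eq_zero.2 hs₀]
  · rw [ProbabilityTheory.cond, lintegral_smul_measure, smul_eq_mul, ← mul_assoc,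
      ENNReal.mul_inv_cancel hs₀ hs, one_mul]

lemma lintegral_eq_tsum_measure_mul_lintegral_cond [IsFiniteMeasure μ] [Countable α]
    [MeasurableSpace α] [MeasurableSingletonClass α] {N : Ω → α} (hN : Measurable N)
    (f : Ω → ENNReal) :
    ∫⁻ ω, f ω ∂μ = ∑' a, μ (N ⁻¹' {a}) * ∫⁻ ω, f ω ∂μ[|N ← a] := by
  simp_rw [measure_mul_lintegral_cond (measure_ne_top _ _)]
  rw [← lintegral_iUnion (fun a => hN (measurableSet_singleton a)) (pairwise_disjoint_fiber N),
    ← preimage_iUnion, iUnion_of_singleton, preimage_univ, Measure.restrict_univ]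

lemma lintegral_lt_top_of_lintegral_cond_le [IsFiniteMeasure μ] [Countable α]
    [MeasurableSpace α] [MeasurableSingletonClass α] {N : Ω → α} (hN : Measurable N)
    {f : Ω → ENNReal} {a b : α → ℝ} (hb : ∀ i, 0 ≤ b i)
    (hμN : ∀ i, μ (N ⁻¹' {i}) ≤ ENNReal.ofReal (a i))
    (hf : ∀ i, ∫⁻ ω, f ω ∂μ[|N ← i] ≤ ENNReal.ofReal (b i)) (hab : Summable (a * b)) :
    ∫⁻ ω, f ω ∂μ < ⊤ :=
  calc ∫⁻ ω, f ω ∂μ = ∑' i, μ (N ⁻¹' {i}) * ∫⁻ ω, f ω ∂μ[|N ← i] :=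
        lintegral_eq_tsum_measure_mul_lintegral_cond hN f
    _ ≤ ∑' i, ENNReal.ofReal (a i * b i) := by
        refine ENNReal.tsum_le_tsum fun i => ?_
        rw [ENNReal.ofReal_mul' (hb i)]
        exact mul_le_mul' (hμN i) (hf i)
    _ < ⊤ := hab.tsum_ofReal_lt_top

end Fibers

noncomputable def smallBallRadius (C₁ C₂ t : ℝ) (k : ℕ) : ℝ := C₁⁻¹ * (t / (k + 1)) ^ C₂

section SmallBallRadius

variable {C₁ C₂ t : ℝ}

lemma smallBallRadius_pos (hC₁ : 0 < C₁) (ht : 0 < t) (k : ℕ) : 0 < smallBallRadius C₁ C₂ t k :=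
  mul_pos (inv_pos.2 hC₁) (Real.rpow_pos_of_pos (by positivity) _)

lemma smallBallRadius_le_one (hC₁ : 1 ≤ C₁) (hC₂ : 0 ≤ C₂) (ht₀ : 0 ≤ t) (ht₁ : t ≤ 1) (k : ℕ) :
    smallBallRadius C₁ C₂ t k ≤ 1 := by
  have hk : t ≤ (k : ℝ) + 1 := ht₁.trans (by simp)
  exact mul_le_one₀ (inv_le_one_of_one_le₀ hC₁) (by positivity)
    (Real.rpow_le_one (by positivity) (div_le_one_of_le₀ hk (by positivity)) hC₂)

lemma smallBallRadius_rpow_neg_le (hC₁ : 0 < C₁) (hC₂ : 0 ≤ C₂) (ht : 0 < t) {q : ℝ}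
    (hq : 0 ≤ q) (k : ℕ) :
    smallBallRadius C₁ C₂ t k ^ (-q) ≤ C₁ ^ q / t ^ (C₂ * q) * Real.exp (C₂ * q) ^ k := by
  have hk : (0 : ℝ) < k + 1 := by positivity
  have hsplit : smallBallRadius C₁ C₂ t k ^ (-q) = C₁ ^ q / t ^ (C₂ * q) * (k + 1) ^ (C₂ * q) := by
    rw [smallBallRadius, Real.mul_rpow (by positivity) (by positivity), Real.inv_rpow hC₁.le,
      ← Real.rpow_neg hC₁.le, neg_neg, ← Real.rpow_mul (by positivity),
      Real.div_rpow ht.le hk.le, mul_neg, Real.rpow_neg ht.le, Real.rpow_neg hk.le]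
    field_simp
  rw [hsplit]
  gcongr
  calc ((k : ℝ) + 1) ^ (C₂ * q) ≤ Real.exp k ^ (C₂ * q) := by
        gcongr; exact Real.add_one_le_exp k
    _ = Real.exp (C₂ * q) ^ k := by rw [← Real.exp_mul, ← Real.exp_nat_mul, mul_comm]

end SmallBallRadius

theorem negative_moments_from_conditional_small_ball_general
    {Ω : Type*} [MeasurableSpace Ω] (μ : Measure Ω) [IsProbabilityMeasure μ]
    (X : Ω → ℝ) (hXmeas : Measurable X) (hXnonneg : ∀ ω, 0 ≤ X ω)
    (N : Ω → ℕ) (hNmeas : Measurable N)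
    (lam p C₁ C₂ t : ℝ) (hp : 1 ≤ p) (hC₁ : 1 ≤ C₁)
    (hC₂ : 0 < C₂) (ht : t ∈ Set.Ioc (0:ℝ) 1)
    (hN : ∀ k : ℕ, μ {ω | N ω = k}
      = ENNReal.ofReal (Real.exp (-lam) * lam ^ k / (Nat.factorial k)))
    (hcond : ∀ k : ℕ, ∀ ε : ℝ, 0 < ε → ε ≤ C₁⁻¹ * (t / ((k : ℝ) + 1)) ^ C₂ →
      (μ[|{ω | N ω = k}]) {ω | X ω ≤ ε} ≤ ENNReal.ofReal (ε ^ p)) :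
    (∀ n : ℕ, 0 < n → (n : ℝ) * p < p →
      (∫⁻ ω, ENNReal.ofReal (X ω ^ (-((n : ℝ) * p))) ∂μ) < ⊤) ∧
    (∀ q : ℝ, 0 < q → q < p →
      (∫⁻ ω, ENNReal.ofReal (X ω ^ (-q)) ∂μ) < ⊤) := by
  obtain ⟨ht₀, ht₁⟩ := ht
  refine ⟨fun n hn hnp => ?_, fun q hq hqp => ?_⟩
  · exact absurd hnp (not_lt.2 (le_mul_of_one_le_left (by linarith) (by exact_mod_cast hn)))
  have hC₁₀ : 0 < C₁ := one_pos.trans_le hC₁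
  set K := p / (p - q) * (C₁ ^ q / t ^ (C₂ * q))
  set r := Real.exp (C₂ * q)
  refine lintegral_lt_top_of_lintegral_cond_le hNmeas (b := fun k => K * r ^ k)
    (fun k => by positivity) (fun k => (hN k).le) (fun k => ?_) ?_
  · calc _ ≤ ENNReal.ofReal (p / (p - q) * smallBallRadius C₁ C₂ t k ^ (-q)) :=
          lintegral_rpow_neg_le_of_measure_le_rpow hXmeas hXnonneg hq hqp
            (smallBallRadius_pos hC₁₀ ht₀ k) (smallBallRadius_le_one hC₁ hC₂.le ht₀.le ht₁ k)
            (hcond k)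
      _ ≤ ENNReal.ofReal (K * r ^ k) := by
          rw [mul_assoc]
          gcongr
          exact smallBallRadius_rpow_neg_le hC₁₀ hC₂.le ht₀ hq.le k
  · exact ((Real.summable_pow_div_factorial (lam * r)).mul_left (Real.exp (-lam) * K)).congr
      fun k => by simp only [Pi.mul_apply]; ring

/-- Negative moments from conditional small-ball estimates: if `N` is Poisson(λ)
and `μ(X ≤ ε | N = k) ≤ ε^p` for `0 < ε ≤ C₁⁻¹ (t/(k+1))^{C₂}`, then
`𝔼[X^{-np}] < ∞` for every positive integer `n` with `np < p`, and more generally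
`𝔼[X^{-q}] < ∞` for every `0 < q < p`. -/
theorem negative_moments_from_conditional_small_ball
    {Ω : Type*} [MeasurableSpace Ω] (μ : Measure Ω) [IsProbabilityMeasure μ]
    (X : Ω → ℝ) (hXmeas : Measurable X) (hXnonneg : ∀ ω, 0 ≤ X ω)
    (N : Ω → ℕ) (hNmeas : Measurable N)
    (lam p C₁ C₂ t : ℝ) (hlam : 0 < lam) (hp : 1 ≤ p) (hC₁ : 1 ≤ C₁)
    (hC₂ : 0 < C₂) (ht : t ∈ Set.Ioc (0:ℝ) 1)
    (hN : ∀ k : ℕ, μ {ω | N ω = k}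
      = ENNReal.ofReal (Real.exp (-lam) * lam ^ k / (Nat.factorial k)))
    (hcond : ∀ k : ℕ, ∀ ε : ℝ, 0 < ε → ε ≤ C₁⁻¹ * (t / ((k : ℝ) + 1)) ^ C₂ →
      (μ[|{ω | N ω = k}]) {ω | X ω ≤ ε} ≤ ENNReal.ofReal (ε ^ p)) :
    (∀ n : ℕ, 0 < n → (n : ℝ) * p < p →
      (∫⁻ ω, ENNReal.ofReal (X ω ^ (-((n : ℝ) * p))) ∂μ) < ⊤) ∧
    (∀ q : ℝ, 0 < q → q < p →
      (∫⁻ ω, ENNReal.ofReal (X ω ^ (-q)) ∂μ) < ⊤) :=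
  negative_moments_from_conditional_small_ball_general μ X hXmeas hXnonneg N hNmeas lam p C₁ C₂ t hp
    hC₁ hC₂ ht hN hcond
end

section
/- Let Q : ℝⁿ → ℝ be the quadratic form Q(v) = vᵀ A v of a symmetric positive semidefinite matrix A with ‖A‖ ≤ R. If for every unit vector v and every ε ∈ (0, ε₀], ℙ(vᵀ A v ≤ ε) ≤ ε^p with p > n, then there exist constants c, ε₁ > 0 (depending on n, p, R, ε₀) such that ℙ(inf_{|v|=1} vᵀ A v ≤ ε) ≤ c ε^{p−n} for all ε ∈ (0, ε₁], via a covering argument on the unit sphere. -/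
/-!
Take a `δ`-net of the unit sphere with `δ = ε / (2R)`; a volume comparison of disjoint balls
bounds its size by `(3/δ)^n = (6R/ε)^n`. Since `v ↦ ⟪v, A v⟫` is `2R`-Lipschitz on the sphere,
if its infimum is at most `ε` then it is at most `3ε` at some point of the net, and a union bound
over the net gives `(6R/ε)^n (3ε)^p`.
-/

open MeasureTheory Metric Module
open scoped NNReal ENNReal Finset

namespace Metric

variable {E : Type*} [NormedAddCommGroup E] [NormedSpace ℝ E] [FiniteDimensional ℝ E]

/-- The balls of radius `δ / 2` around the points of `s` are disjoint and lie in the ball of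
radius `r + δ / 2 = (1 + 2r/δ) · δ/2`, so comparing Haar measures bounds their number. -/
theorem IsSeparated.card_le_of_subset_closedBall {s : Finset E} {x : E} {r : ℝ} {δ : ℝ≥0}
    (hsep : IsSeparated δ (s : Set E)) (hs : ↑s ⊆ closedBall x r) (hr : 0 ≤ r) (hδ : 0 < δ) :
    (#s : ℝ) ≤ (1 + 2 * r / δ) ^ finrank ℝ E := by
  borelize E
  set μ : Measure E := Measure.addHaar
  set K : ℝ := 1 + 2 * r / δ
  have hK : 0 < K := by positivity
  have hdisj : (s : Set E).PairwiseDisjoint fun c ↦ ball c (δ / 2) := by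
    intro c hc d hd hcd
    refine ball_disjoint_ball ?_
    have : (δ : ℝ≥0∞) < edist c d := hsep hc hd hcd
    rw [edist_nndist, ENNReal.coe_lt_coe, ← NNReal.coe_lt_coe, coe_nndist] at this
    linarith
  have hsub : ⋃ c ∈ s, ball c (δ / 2) ⊆ ball x (K * (δ / 2)) := by
    refine Set.iUnion₂_subset fun c hc ↦ ball_subset_ball' ?_
    have : dist c x ≤ r := hs hc
    have : K * (δ / 2) = δ / 2 + r := by simp only [K]; field_simp
    linarith
  have hvol : #s * μ (ball 0 (δ / 2)) ≤ ENNReal.ofReal (K ^ finrank ℝ E) * μ (ball 0 (δ / 2)) :=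
    calc #s * μ (ball 0 (δ / 2)) = μ (⋃ c ∈ s, ball c (δ / 2)) := by
          rw [measure_biUnion_finset hdisj fun _ _ ↦ measurableSet_ball]
          simp [Measure.addHaar_ball_center]
      _ ≤ μ (ball x (K * (δ / 2))) := measure_mono hsub
      _ = ENNReal.ofReal (K ^ finrank ℝ E) * μ (ball 0 (δ / 2)) :=
          μ.addHaar_ball_mul_of_pos x hK _
  have hcard := (ENNReal.mul_le_mul_iff_left (measure_ball_pos μ 0 (by positivity)).ne'
    measure_ball_lt_top.ne).1 hvol
  simpa using ENNReal.toReal_le_of_le_ofReal (by positivity) hcard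

theorem packingNumber_ne_top_of_totallyBounded {X : Type*} [PseudoEMetricSpace X] {A : Set X}
    (hA : TotallyBounded A) {δ : ℝ≥0} (hδ : δ ≠ 0) : packingNumber δ A ≠ ⊤ := by
  obtain ⟨N, -, hN_fin, hN⟩ :=
    exists_finite_isCover_of_totallyBounded (ε := δ / 2) (by simpa using hδ) hA
  refine ne_top_of_le_ne_top hN_fin.encard_lt_top.ne ?_
  simpa [mul_div_cancel₀] using (packingNumber_two_mul_le_externalCoveringNumber (δ / 2) A).trans
    hN.externalCoveringNumber_le_encard

theorem exists_finset_isCover_card_le {A : Set E} {x : E} {r : ℝ} {δ : ℝ≥0}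
    (hA : A ⊆ closedBall x r) (hr : 0 ≤ r) (hδ : 0 < δ) :
    ∃ s : Finset E, ↑s ⊆ A ∧ IsCover δ A s ∧ (#s : ℝ) ≤ (1 + 2 * r / δ) ^ finrank ℝ E := by
  have htop : packingNumber δ A ≠ ⊤ :=
    packingNumber_ne_top_of_totallyBounded ((isCompact_closedBall x r).totallyBounded.subset hA)
      hδ.ne'
  have hfin : (maximalSeparatedSet δ A).Finite := by
    rw [← Set.encard_ne_top_iff, encard_maximalSeparatedSet htop]
    exact htop
  refine ⟨hfin.toFinset, by simpa using maximalSeparatedSet_subset,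
    by simpa using isCover_maximalSeparatedSet htop, ?_⟩
  refine IsSeparated.card_le_of_subset_closedBall (x := x) ?_ ?_ hr hδ
  · simpa using isSeparated_maximalSeparatedSet
  · simpa using maximalSeparatedSet_subset.trans hA

theorem exists_finset_isCover_sphere_card_le {δ : ℝ≥0} (hδ₀ : 0 < δ) (hδ₁ : δ ≤ 1) :
    ∃ s : Finset E, ↑s ⊆ sphere (0 : E) 1 ∧ IsCover δ (sphere (0 : E) 1) s ∧
      (#s : ℝ) ≤ (3 / δ) ^ finrank ℝ E := by
  obtain ⟨s, hs_sphere, hs_cover, hs_card⟩ :=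
    exists_finset_isCover_card_le (sphere_subset_closedBall (x := (0 : E))) zero_le_one hδ₀
  refine ⟨s, hs_sphere, hs_cover, hs_card.trans (pow_le_pow_left₀ (by positivity) ?_ _)⟩
  rw [le_div_iff₀ (by positivity)]
  field_simp
  linarith [NNReal.coe_le_one.2 hδ₁]

end Metric

theorem measure_biUnion_finset_le_card_mul {ι Ω : Type*} [MeasurableSpace Ω] {μ : Measure Ω}
    {s : Finset ι} {t : ι → Set Ω} {b : ℝ≥0∞} (h : ∀ i ∈ s, μ (t i) ≤ b) :
    μ (⋃ i ∈ s, t i) ≤ #s * b :=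
  (measure_biUnion_finset_le s t).trans <|
    (Finset.sum_le_card_nsmul s _ b h).trans_eq (nsmul_eq_mul _ _)

namespace ContinuousLinearMap

variable {F : Type*} [NormedAddCommGroup F] [InnerProductSpace ℝ F]

theorem abs_inner_apply_self_sub_le (T : F →L[ℝ] F) {v w : F} (hv : ‖v‖ ≤ 1) (hw : ‖w‖ ≤ 1) :
    |inner ℝ v (T v) - inner ℝ w (T w)| ≤ 2 * ‖T‖ * ‖v - w‖ := by
  have hsplit : inner ℝ v (T v) - inner ℝ w (T w) =
      inner ℝ (v - w) (T v) + inner ℝ w (T (v - w)) := by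
    simp only [inner_sub_left, map_sub, inner_sub_right]
    ring
  have h₁ : |inner ℝ (v - w) (T v)| ≤ ‖T‖ * ‖v - w‖ :=
    calc |inner ℝ (v - w) (T v)| ≤ ‖v - w‖ * (‖T‖ * ‖v‖) :=
          (abs_real_inner_le_norm _ _).trans (by gcongr; exact T.le_opNorm v)
      _ ≤ ‖v - w‖ * (‖T‖ * 1) := by gcongr
      _ = ‖T‖ * ‖v - w‖ := by ring
  have h₂ : |inner ℝ w (T (v - w))| ≤ ‖T‖ * ‖v - w‖ :=
    calc |inner ℝ w (T (v - w))| ≤ ‖w‖ * (‖T‖ * ‖v - w‖) :=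
          (abs_real_inner_le_norm _ _).trans (by gcongr; exact T.le_opNorm _)
      _ ≤ 1 * (‖T‖ * ‖v - w‖) := by gcongr
      _ = ‖T‖ * ‖v - w‖ := one_mul _
  rw [hsplit]
  linarith [abs_add_le (inner ℝ (v - w) (T v)) (inner ℝ w (T (v - w)))]

theorem exists_mem_inner_apply_self_le_of_sInf_le [Nontrivial F] (T : F →L[ℝ] F) {R : ℝ}
    (hT : ‖T‖ ≤ R) {s : Set F} {δ : ℝ≥0} (hs_ball : s ⊆ closedBall 0 1)
    (hs : IsCover δ (sphere 0 1) s) {ε : ℝ} (hε : 0 < ε) (hδ : 2 * R * δ ≤ ε)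
    (h : sInf {x : ℝ | ∃ v : F, ‖v‖ = 1 ∧ x = inner ℝ v (T v)} ≤ ε) :
    ∃ w ∈ s, inner ℝ w (T w) ≤ 3 * ε := by
  obtain ⟨u, hu⟩ := (NormedSpace.sphere_nonempty (x := (0 : F))).2 zero_le_one
  set S := {x : ℝ | ∃ v : F, ‖v‖ = 1 ∧ x = inner ℝ v (T v)}
  have hS : S.Nonempty := ⟨_, u, by simpa using hu, rfl⟩
  obtain ⟨_, ⟨v, hv, rfl⟩, hv_lt⟩ := Real.lt_sInf_add_pos hS hε
  obtain ⟨w, hws, hvw_edist⟩ := hs (show v ∈ sphere (0 : F) 1 by simpa using hv)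
  have hvw : ‖v - w‖ ≤ δ := by
    rw [← dist_eq_norm, ← coe_nndist, NNReal.coe_le_coe, ← ENNReal.coe_le_coe, ← edist_nndist]
    exact hvw_edist
  have hw : ‖w‖ ≤ 1 := by simpa using hs_ball hws
  have hlip := (abs_sub_le_iff.1 (T.abs_inner_apply_self_sub_le hv.le hw)).2
  have : 2 * ‖T‖ * ‖v - w‖ ≤ 2 * R * δ := by
    have : 0 ≤ R := (norm_nonneg T).trans hT
    gcongr
  exact ⟨w, hws, by linarith⟩

end ContinuousLinearMap

theorem small_ball_inf_quadratic_form_general (n : ℕ) (hn : 0 < n)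
    {Ω : Type*} [MeasurableSpace Ω] (μ : Measure Ω)
    (A : Ω → EuclideanSpace ℝ (Fin n) →L[ℝ] EuclideanSpace ℝ (Fin n))
    (R ε₀ p : ℝ) (hR : 0 < R) (hε₀ : 0 < ε₀)
    (hbd : ∀ ω, ‖A ω‖ ≤ R)
    (hsb : ∀ v : EuclideanSpace ℝ (Fin n), ‖v‖ = 1 →
      ∀ ε : ℝ, ε ∈ Set.Ioc 0 ε₀ →
        μ {ω | inner (𝕜 := ℝ) v (A ω v) ≤ ε} ≤ ENNReal.ofReal (ε ^ p)) :
    ∃ c > 0, ∃ ε₁ > 0, ∀ ε : ℝ, ε ∈ Set.Ioc 0 ε₁ →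
      μ {ω | sInf {x : ℝ | ∃ v : EuclideanSpace ℝ (Fin n),
          ‖v‖ = 1 ∧ x = inner (𝕜 := ℝ) v (A ω v)} ≤ ε}
        ≤ ENNReal.ofReal (c * ε ^ (p - n)) := by
  have : NeZero n := ⟨hn.ne'⟩
  refine ⟨(6 * R) ^ n * 3 ^ p, by positivity, min (ε₀ / 3) (2 * R), by positivity, ?_⟩
  rintro ε ⟨hε, hε₁⟩
  have hεε₀ : 3 * ε ≤ ε₀ := by linarith [hε₁.trans (min_le_left _ _)]
  set δ : ℝ≥0 := (ε / (2 * R)).toNNReal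
  have hδ : (δ : ℝ) = ε / (2 * R) := Real.coe_toNNReal _ (by positivity)
  have hδ₁ : δ ≤ 1 := by
    rw [← NNReal.coe_le_one, hδ, div_le_one (by positivity)]
    exact hε₁.trans (min_le_right _ _)
  have h2Rδ : 2 * R * δ ≤ ε := by rw [hδ, mul_div_cancel₀ _ (by positivity)]
  obtain ⟨s, hs_sphere, hs_cover, hs_card⟩ := exists_finset_isCover_sphere_card_le
    (E := EuclideanSpace ℝ (Fin n)) (Real.toNNReal_pos.2 (by positivity)) hδ₁
  have hcard : (#s : ℝ) * (3 * ε) ^ p ≤ (6 * R) ^ n * 3 ^ p * ε ^ (p - n) :=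
    calc (#s : ℝ) * (3 * ε) ^ p ≤ (3 / δ) ^ n * (3 * ε) ^ p := by
          gcongr; rwa [finrank_euclideanSpace_fin] at hs_card
      _ = (6 * R) ^ n * 3 ^ p * ε ^ (p - n) := by
          rw [Real.mul_rpow (by norm_num) hε.le, Real.rpow_sub hε, Real.rpow_natCast,
            show 3 / (δ : ℝ) = 6 * R / ε by rw [hδ]; field_simp; ring, div_pow]
          field_simp
  calc μ _ ≤ μ (⋃ w ∈ s, {ω | inner ℝ w (A ω w) ≤ 3 * ε}) := measure_mono fun ω hω ↦ by
        obtain ⟨w, hw, hle⟩ := (A ω).exists_mem_inner_apply_self_le_of_sInf_le (hbd ω)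
          (hs_sphere.trans sphere_subset_closedBall) hs_cover hε h2Rδ hω
        exact Set.mem_biUnion hw hle
    _ ≤ #s * ENNReal.ofReal ((3 * ε) ^ p) := measure_biUnion_finset_le_card_mul fun w hw ↦
        hsb w (by simpa using hs_sphere hw) _ ⟨by positivity, hεε₀⟩
    _ = ENNReal.ofReal (#s * (3 * ε) ^ p) := by
        rw [ENNReal.ofReal_mul (by positivity), ENNReal.ofReal_natCast]
    _ ≤ ENNReal.ofReal ((6 * R) ^ n * 3 ^ p * ε ^ (p - n)) := ENNReal.ofReal_le_ofReal hcard

/-- Covering argument on the unit sphere: if `A` is a random symmetric positive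
semidefinite operator with `‖A ω‖ ≤ R` and
`ℙ(⟪v, A v⟫ ≤ ε) ≤ ε^p` for every unit `v` and `ε ∈ (0, ε₀]` with `p > n`, then
there are `c, ε₁ > 0` such that
`ℙ(inf_{‖v‖=1} ⟪v, A v⟫ ≤ ε) ≤ c ε^{p-n}` for all `ε ∈ (0, ε₁]`. -/
theorem small_ball_inf_quadratic_form (n : ℕ) (hn : 0 < n)
    {Ω : Type*} [MeasurableSpace Ω] (μ : Measure Ω) [IsProbabilityMeasure μ]
    (A : Ω → EuclideanSpace ℝ (Fin n) →L[ℝ] EuclideanSpace ℝ (Fin n))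
    (R ε₀ p : ℝ) (hR : 0 < R) (hε₀ : 0 < ε₀) (hp : (n : ℝ) < p)
    (hsa : ∀ ω, IsSelfAdjoint (A ω))
    (hpos : ∀ ω, ∀ v : EuclideanSpace ℝ (Fin n), 0 ≤ inner (𝕜 := ℝ) v (A ω v))
    (hbd : ∀ ω, ‖A ω‖ ≤ R)
    (hsb : ∀ v : EuclideanSpace ℝ (Fin n), ‖v‖ = 1 →
      ∀ ε : ℝ, ε ∈ Set.Ioc 0 ε₀ →
        μ {ω | inner (𝕜 := ℝ) v (A ω v) ≤ ε} ≤ ENNReal.ofReal (ε ^ p)) :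
    ∃ c > 0, ∃ ε₁ > 0, ∀ ε : ℝ, ε ∈ Set.Ioc 0 ε₁ →
      μ {ω | sInf {x : ℝ | ∃ v : EuclideanSpace ℝ (Fin n),
          ‖v‖ = 1 ∧ x = inner (𝕜 := ℝ) v (A ω v)} ≤ ε}
        ≤ ENNReal.ofReal (c * ε ^ (p - n)) :=
  small_ball_inf_quadratic_form_general n hn μ A R ε₀ p hR hε₀ hbd hsb
end
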